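/- Let G be a connected multigraph (loops and multiple edges allowed) and define its loop number L(G) = |V_1(G)| + |V_2(G)| + b_1(G), where |V_k(G)| is the number of vertices of degree k and b_1(G) = |E(G)| - |V(G)| + 1 is its first Betti number. If L(G) ≤ n for some n ≥ 2, then G has at most 2n - 2 vertices. -/

import Mathlib

/-- A finite multigraph: loops and multiple edges allowed. Each edge is assigned its
pair of (possibly equal) endpoints. -/
structure Multigraph where
  V : Type
  E : Type
  [fintypeV : Fintype V]
  [decEqV : DecidableEq V]
  [fintypeE : Fintype E]
  ends : E → Sym2 V

attribute [instance] Multigraph.fintypeV Multigraph.decEqV Multigraph.fintypeE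

namespace Multigraph

variable (G : Multigraph)

/-- The degree of a vertex; a loop at `v` contributes `2` to the degree of `v`. -/
def degree (v : G.V) : ℕ :=
  ∑ e : G.E, (if G.ends e = Sym2.diag v then 2 else if v ∈ G.ends e then 1 else 0)

/-- Adjacency: some edge has endpoints `{u, v}`. -/
def Adj (u v : G.V) : Prop := ∃ e : G.E, G.ends e = s(u, v)

/-- A multigraph is connected if it is nonempty and any two vertices are joined by a walk. -/
def Connected : Prop := Nonempty G.V ∧ ∀ u v : G.V, Relation.ReflTransGen G.Adj u v

/-- The first Betti number `b₁(G) = |E| - |V| + 1` of a connected multigraph. -/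
def b1 : ℤ := (Fintype.card G.E : ℤ) - (Fintype.card G.V : ℤ) + 1

/-- The number of vertices of degree `k`. -/
def numDeg (k : ℕ) : ℕ := (Finset.univ.filter (fun v : G.V => G.degree v = k)).card

/-- The Feynman loop number `L(G) = |V₁(G)| + |V₂(G)| + b₁(G)`. -/
def loopNumber : ℤ := (G.numDeg 1 : ℤ) + (G.numDeg 2 : ℤ) + G.b1

end Multigraph

/-!
With at least two vertices, connectedness makes every degree positive, so the weight
`deg v + 2·[deg v = 1] + [deg v = 2]` of every vertex is at least `3`. Summing and using the
handshake lemma gives `3|V| ≤ 2|E| + 2|V₁| + |V₂| ≤ 2 L(G) + 2|V| - 2`, i.e. `|V| ≤ 2 L(G) - 2`.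
-/

theorem Sym2.sum_ite_diag_mem {V : Type*} [Fintype V] [DecidableEq V] (z : Sym2 V) :
    ∑ v : V, (if z = Sym2.diag v then 2 else if v ∈ z then 1 else 0) = 2 := by
  induction z using Sym2.ind with
  | _ a b =>
    have hsplit : ∀ v : V, (if s(a, b) = Sym2.diag v then 2 else if v ∈ s(a, b) then 1 else 0) =
        (if v = a then 1 else 0) + (if v = b then 1 else 0) := by
      intro v
      simp only [Sym2.diag, Sym2.eq_iff, Sym2.mem_iff]
      by_cases hva : v = a <;> by_cases hvb : v = b <;> subst_vars <;> simp_all [eq_comm]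
    simp only [hsplit, Finset.sum_add_distrib, Finset.sum_ite_eq', Finset.mem_univ, if_true]

namespace Multigraph

variable (G : Multigraph)

theorem sum_degree : ∑ v : G.V, G.degree v = 2 * Fintype.card G.E := by
  simp only [degree]
  rw [Finset.sum_comm]
  simp [Sym2.sum_ite_diag_mem, mul_comm]

variable {G}

theorem degree_pos_of_mem_ends {v : G.V} {e : G.E} (hv : v ∈ G.ends e) : 0 < G.degree v :=
  Finset.sum_pos' (fun _ _ => Nat.zero_le _)
    ⟨e, Finset.mem_univ e, by split_ifs <;> simp_all⟩

theorem Connected.degree_pos (hconn : G.Connected) (hcard : 1 < Fintype.card G.V) (v : G.V) :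
    0 < G.degree v := by
  obtain ⟨u, hu⟩ := Fintype.exists_ne_of_one_lt_card hcard v
  rcases (hconn.2 v u).cases_head with rfl | ⟨w, ⟨e, he⟩, -⟩
  · exact absurd rfl hu
  · exact degree_pos_of_mem_ends (he ▸ Sym2.mem_mk_left v w)

theorem numDeg_eq_sum (k : ℕ) : G.numDeg k = ∑ v : G.V, if G.degree v = k then 1 else 0 :=
  Finset.card_filter _ _

theorem three_mul_card_le (hdeg : ∀ v, 0 < G.degree v) :
    3 * Fintype.card G.V ≤ 2 * Fintype.card G.E + 2 * G.numDeg 1 + G.numDeg 2 := by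
  have hweight : ∀ v : G.V, 3 ≤ G.degree v + 2 * (if G.degree v = 1 then 1 else 0) +
      (if G.degree v = 2 then 1 else 0) := fun v => by
    have := hdeg v
    split_ifs <;> omega
  calc 3 * Fintype.card G.V = ∑ _v : G.V, 3 := by simp [mul_comm]
    _ ≤ ∑ v : G.V, (G.degree v + 2 * (if G.degree v = 1 then 1 else 0) +
          (if G.degree v = 2 then 1 else 0)) := Finset.sum_le_sum fun v _ => hweight v
    _ = 2 * Fintype.card G.E + 2 * G.numDeg 1 + G.numDeg 2 := by
      rw [Finset.sum_add_distrib, Finset.sum_add_distrib, ← Finset.mul_sum, sum_degree,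
        numDeg_eq_sum, numDeg_eq_sum]

end Multigraph

/-- A connected multigraph with loop number at most `n` (with `n ≥ 2`) has at most
`2n - 2` vertices. -/
theorem stmt_11 (n : ℕ) (hn : 2 ≤ n) (G : Multigraph) (hconn : G.Connected)
    (hL : G.loopNumber ≤ n) : Fintype.card G.V ≤ 2 * n - 2 := by
  rcases le_or_gt (Fintype.card G.V) 1 with hsmall | hcard
  · omega
  have hcount := Multigraph.three_mul_card_le (hconn.degree_pos hcard)
  simp only [Multigraph.loopNumber, Multigraph.b1] at hL
  omega
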